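/- Fix real constants m₀ > 0, ω > 0, ħ > 0, a > -1, γ > 1/2 and set λ₀ = √(m₀ω/ħ). Define for x ≠ 0: (X̃f)(x) = √m₀·λ₀^a·|x|^a·x·f(x), (P̃f)(x) = -iħ·(λ₀^a√m₀)⁻¹·( |x|^{-a}·f'(x) - (a/2)·|x|^{-a-2}·x·f(x) - (γ-1/2)·|x|^{-a}·x⁻¹·f(-x) ), (ã^±f)(x) = (1/√2)·(√(ω/ħ)·(X̃f)(x) ∓ (i/√(ħω))·(P̃f)(x)), and the Hamiltonian (Hf)(x) = (1/2)·P̃(P̃f)(x) + (ω²/2)·X̃(X̃f)(x). Then for every f : ℝ → ℂ three times differentiable on ℝ \ {0} and every x ≠ 0: H(ã⁺f)(x) - ã⁺(Hf)(x) = ħω·(1+a)·(ã⁺f)(x) and H(ã⁻f)(x) - ã⁻(Hf)(x) = -ħω·(1+a)·(ã⁻f)(x). -/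

import Mathlib

/-- The deformed position operator `(X̃f)(x) = √m₀·λ₀^a·|x|^a·x·f(x)`. -/
noncomputable def Xop (m₀ lam a : ℝ) (f : ℝ → ℂ) (x : ℝ) : ℂ :=
  ((Real.sqrt m₀ * lam ^ a * |x| ^ a * x : ℝ) : ℂ) * f x

/-- The deformed parabose momentum operator
`(P̃f)(x) = -iħ·(λ₀^a√m₀)⁻¹·(|x|^(-a)·f'(x) - (a/2)·|x|^(-a-2)·x·f(x)
  - (γ-1/2)·|x|^(-a)·x⁻¹·f(-x))`. -/
noncomputable def Ppb (hbar m₀ lam a γ : ℝ) (f : ℝ → ℂ) (x : ℝ) : ℂ :=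
  (-Complex.I) * (hbar : ℂ) * (((lam ^ a * Real.sqrt m₀ : ℝ) : ℂ))⁻¹ *
    (((|x| ^ (-a) : ℝ) : ℂ) * deriv f x
      - ((a / 2 : ℝ) : ℂ) * ((|x| ^ (-a - 2) : ℝ) : ℂ) * (x : ℂ) * f x
      - ((γ - 1 / 2 : ℝ) : ℂ) * ((|x| ^ (-a) : ℝ) : ℂ) * (x : ℂ)⁻¹ * f (-x))

/-- The parabose creation operator `(ã⁺f)(x) = (1/√2)·(√(ω/ħ)·(X̃f)(x) - (i/√(ħω))·(P̃f)(x))`. -/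
noncomputable def aPlusPB (hbar m₀ ω lam a γ : ℝ) (f : ℝ → ℂ) (x : ℝ) : ℂ :=
  ((1 / Real.sqrt 2 : ℝ) : ℂ) *
    (((Real.sqrt (ω / hbar) : ℝ) : ℂ) * Xop m₀ lam a f x
      - Complex.I / ((Real.sqrt (hbar * ω) : ℝ) : ℂ) * Ppb hbar m₀ lam a γ f x)

/-- The parabose annihilation operator
`(ã⁻f)(x) = (1/√2)·(√(ω/ħ)·(X̃f)(x) + (i/√(ħω))·(P̃f)(x))`. -/
noncomputable def aMinusPB (hbar m₀ ω lam a γ : ℝ) (f : ℝ → ℂ) (x : ℝ) : ℂ :=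
  ((1 / Real.sqrt 2 : ℝ) : ℂ) *
    (((Real.sqrt (ω / hbar) : ℝ) : ℂ) * Xop m₀ lam a f x
      + Complex.I / ((Real.sqrt (hbar * ω) : ℝ) : ℂ) * Ppb hbar m₀ lam a γ f x)

/-- The parabose Hamiltonian `(Hf)(x) = (1/2)·P̃(P̃f)(x) + (ω²/2)·X̃(X̃f)(x)`. -/
noncomputable def HopPB (hbar m₀ ω lam a γ : ℝ) (f : ℝ → ℂ) (x : ℝ) : ℂ :=
  (1 / 2 : ℂ) * Ppb hbar m₀ lam a γ (Ppb hbar m₀ lam a γ f) x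
    + ((ω ^ 2 / 2 : ℝ) : ℂ) * Xop m₀ lam a (Xop m₀ lam a f) x

open Complex Pointwise

/-! The correction terms of the deformed momentum give `[P̃, X̃] = -iħ((1 + a) + (2γ - 1)R)`,
where `R` is the reflection `f ↦ f(-·)`, and both `X̃` and `P̃` anticommute with `R`. Hence the
`R`-terms cancel in `[P̃², X̃] = -2iħ(1 + a)P̃` and `[P̃, X̃²] = -2iħ(1 + a)X̃`, so that
`[H, X̃] = -iħ(1 + a)P̃` and `[H, P̃] = iħω²(1 + a)X̃`. On the span of `X̃` and `P̃` the commutator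
with `H` thus acts as a `2 × 2` matrix, and `ã^±` are its eigenvectors for the eigenvalues
`±ħω(1 + a)`, because `√(ω/ħ) = ω/√(ħω)`. -/

section TwiceDifferentiable

variable {𝕜 F 𝔸 : Type*} [NontriviallyNormedField 𝕜] [NormedAddCommGroup F] [NormedSpace 𝕜 F]
  [NormedRing 𝔸] [NormedAlgebra 𝕜 𝔸] {U : Set 𝕜}

def TwiceDifferentiableOn (g : 𝕜 → F) (U : Set 𝕜) : Prop :=
  DifferentiableOn 𝕜 g U ∧ DifferentiableOn 𝕜 (deriv g) U

theorem ContDiffOn.twiceDifferentiableOn {g : 𝕜 → F} (hg : ContDiffOn 𝕜 2 g U) (hU : IsOpen U) :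
    TwiceDifferentiableOn g U :=
  ⟨hg.differentiableOn (by norm_num),
    (hg.deriv_of_isOpen hU (m := 1) (by norm_num)).differentiableOn one_ne_zero⟩

theorem TwiceDifferentiableOn.sub {g h : 𝕜 → F} (hg : TwiceDifferentiableOn g U)
    (hh : TwiceDifferentiableOn h U) (hU : IsOpen U) :
    TwiceDifferentiableOn (fun y => g y - h y) U :=
  ⟨hg.1.sub hh.1, (hg.2.sub hh.2).congr fun _ hy =>
    deriv_fun_sub (hg.1.differentiableAt (hU.mem_nhds hy)) (hh.1.differentiableAt (hU.mem_nhds hy))⟩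

theorem TwiceDifferentiableOn.mul {g h : 𝕜 → 𝔸} (hg : TwiceDifferentiableOn g U)
    (hh : TwiceDifferentiableOn h U) (hU : IsOpen U) :
    TwiceDifferentiableOn (fun y => g y * h y) U :=
  ⟨hg.1.mul hh.1, ((hg.2.mul hh.1).add (hg.1.mul hh.2)).congr fun _ hy =>
    deriv_fun_mul (hg.1.differentiableAt (hU.mem_nhds hy)) (hh.1.differentiableAt (hU.mem_nhds hy))⟩

theorem TwiceDifferentiableOn.const_mul {h : 𝕜 → 𝔸} (c : 𝔸) (hh : TwiceDifferentiableOn h U)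
    (hU : IsOpen U) : TwiceDifferentiableOn (fun y => c * h y) U :=
  (contDiffOn_const.twiceDifferentiableOn hU).mul hh hU

theorem TwiceDifferentiableOn.comp_neg {g : 𝕜 → F} (hg : TwiceDifferentiableOn g U) :
    TwiceDifferentiableOn (fun y => g (-y)) (-U) := by
  have hneg : Set.MapsTo (fun y : 𝕜 => -y) (-U) U := fun y hy => Set.mem_neg.1 hy
  refine ⟨hg.1.comp (differentiableOn_neg _) hneg, ?_⟩
  rw [show deriv (fun y => g (-y)) = fun y => -deriv g (-y) from funext (deriv_comp_neg g)]
  exact (hg.2.comp (differentiableOn_neg _) hneg).neg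

end TwiceDifferentiable

theorem neg_compl_singleton_zero : -({0}ᶜ : Set ℝ) = {0}ᶜ := by simp

theorem contDiffOn_abs_rpow (p : ℝ) {n : ℕ∞} : ContDiffOn ℝ n (fun y : ℝ => |y| ^ p) {0}ᶜ :=
  fun y hy => ((Real.contDiffAt_rpow_const_of_ne (abs_ne_zero.2 hy)).comp y
    (contDiffAt_abs hy)).contDiffWithinAt

theorem hasDerivAt_abs_rpow_mul_self (p : ℝ) {x : ℝ} (hx : x ≠ 0) :
    HasDerivAt (fun y => |y| ^ p * y) ((p + 1) * |x| ^ p) x := by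
  refine (((hasDerivAt_abs hx).rpow_const (p := p) (Or.inl (abs_ne_zero.2 hx))).mul
    (hasDerivAt_id x)).congr_deriv ?_
  rw [Real.rpow_sub_one (abs_ne_zero.2 hx), id]
  field_simp
  rw [mul_right_comm, sign_mul_self]
  ring

section ParaboseOperators

variable (hbar m₀ ω lam a γ : ℝ)

theorem hasDerivAt_Xop {g : ℝ → ℂ} {x : ℝ} (hx : x ≠ 0) (hg : DifferentiableAt ℝ g x) :
    HasDerivAt (Xop m₀ lam a g)
      (((Real.sqrt m₀ * lam ^ a * (a + 1) * |x| ^ a : ℝ) : ℂ) * g x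
        + ((Real.sqrt m₀ * lam ^ a * |x| ^ a * x : ℝ) : ℂ) * deriv g x) x := by
  have h := ((hasDerivAt_abs_rpow_mul_self a hx).const_mul (Real.sqrt m₀ * lam ^ a)).ofReal_comp
  simp only [← mul_assoc] at h
  exact h.mul hg.hasDerivAt

theorem twiceDifferentiableOn_Xop {f : ℝ → ℂ} (hf : TwiceDifferentiableOn f {0}ᶜ) :
    TwiceDifferentiableOn (Xop m₀ lam a f) {0}ᶜ := by
  have hc : ContDiffOn ℝ 2 (fun y : ℝ => ((Real.sqrt m₀ * lam ^ a * |y| ^ a * y : ℝ) : ℂ)) {0}ᶜ :=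
    ofRealCLM.contDiff.comp_contDiffOn
      ((contDiffOn_const.mul (contDiffOn_abs_rpow a)).mul contDiffOn_id)
  exact (hc.twiceDifferentiableOn isOpen_compl_singleton).mul hf isOpen_compl_singleton

theorem contDiffOn_Ppb_coefficients (n : ℕ∞) :
    ContDiffOn ℝ n (fun y : ℝ => ((|y| ^ (-a) : ℝ) : ℂ)) {0}ᶜ ∧
    ContDiffOn ℝ n (fun y : ℝ => ((a / 2 : ℝ) : ℂ) * ((|y| ^ (-a - 2) : ℝ) : ℂ) * (y : ℂ)) {0}ᶜ ∧
    ContDiffOn ℝ n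
      (fun y : ℝ => ((γ - 1 / 2 : ℝ) : ℂ) * ((|y| ^ (-a) : ℝ) : ℂ) * (y : ℂ)⁻¹) {0}ᶜ := by
  have := contDiffOn_abs_rpow (-a) (n := n)
  have := contDiffOn_abs_rpow (-a - 2) (n := n)
  have : ContDiff ℝ n (fun y : ℝ => (y : ℂ)) := ofRealCLM.contDiff
  exact ⟨by fun_prop, by fun_prop, by fun_prop (disch := simp_all)⟩

theorem differentiableOn_Ppb {f : ℝ → ℂ} (hf : TwiceDifferentiableOn f {0}ᶜ) :
    DifferentiableOn ℝ (Ppb hbar m₀ lam a γ f) {0}ᶜ := by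
  obtain ⟨hA, hB, hC⟩ := contDiffOn_Ppb_coefficients a γ 1
  have hfneg := hf.comp_neg.1
  rw [neg_compl_singleton_zero] at hfneg
  exact (((hA.differentiableOn one_ne_zero |>.mul hf.2).sub
    (hB.differentiableOn one_ne_zero |>.mul hf.1)).sub
    (hC.differentiableOn one_ne_zero |>.mul hfneg)).const_mul _

theorem twiceDifferentiableOn_Ppb {f : ℝ → ℂ} (hf : TwiceDifferentiableOn f {0}ᶜ)
    (hf' : TwiceDifferentiableOn (deriv f) {0}ᶜ) :
    TwiceDifferentiableOn (Ppb hbar m₀ lam a γ f) {0}ᶜ := by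
  have hU : IsOpen ({0}ᶜ : Set ℝ) := isOpen_compl_singleton
  obtain ⟨hA, hB, hC⟩ := contDiffOn_Ppb_coefficients a γ 2
  have hfneg := hf.comp_neg
  rw [neg_compl_singleton_zero] at hfneg
  exact ((((hA.twiceDifferentiableOn hU).mul hf' hU).sub ((hB.twiceDifferentiableOn hU).mul hf hU)
    hU).sub ((hC.twiceDifferentiableOn hU).mul hfneg hU) hU).const_mul _ hU

theorem Ppb_congr {g h : ℝ → ℂ} {x : ℝ} (hx : x ≠ 0) (hgh : Set.EqOn g h {0}ᶜ) :
    Ppb hbar m₀ lam a γ g x = Ppb hbar m₀ lam a γ h x := by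
  have hev : g =ᶠ[nhds x] h := Filter.eventually_of_mem (isOpen_compl_singleton.mem_nhds hx) hgh
  simp only [Ppb, hev.deriv_eq, hgh hx, hgh (neg_ne_zero.2 hx : -x ∈ ({0}ᶜ : Set ℝ))]

theorem Ppb_add {g h : ℝ → ℂ} {x : ℝ} (hg : DifferentiableAt ℝ g x)
    (hh : DifferentiableAt ℝ h x) :
    Ppb hbar m₀ lam a γ (fun y => g y + h y) x
      = Ppb hbar m₀ lam a γ g x + Ppb hbar m₀ lam a γ h x := by
  simp only [Ppb, deriv_fun_add hg hh]
  ring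

theorem Ppb_const_mul (c : ℂ) (g : ℝ → ℂ) (x : ℝ) :
    Ppb hbar m₀ lam a γ (fun y => c * g y) x = c * Ppb hbar m₀ lam a γ g x := by
  simp only [Ppb, deriv_const_mul_field]
  ring

theorem Ppb_comp_neg (g : ℝ → ℂ) {x : ℝ} (hx : x ≠ 0) :
    Ppb hbar m₀ lam a γ (fun y => g (-y)) x = -Ppb hbar m₀ lam a γ g (-x) := by
  have hxC : (x : ℂ) ≠ 0 := ofReal_ne_zero.2 hx
  simp only [Ppb, deriv_comp_neg, abs_neg, neg_neg]
  push_cast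
  field_simp
  ring

theorem Ppb_Xop (hm₀ : 0 < m₀) (hlam : 0 < lam) {g : ℝ → ℂ} {x : ℝ} (hx : x ≠ 0)
    (hg : DifferentiableAt ℝ g x) :
    Ppb hbar m₀ lam a γ (Xop m₀ lam a g) x
      = Xop m₀ lam a (Ppb hbar m₀ lam a γ g) x
        - I * hbar * ((1 + a) * g x + (2 * γ - 1) * g (-x)) := by
  have hxC : (x : ℂ) ≠ 0 := ofReal_ne_zero.2 hx
  have hs : ((|x| ^ a : ℝ) : ℂ) ≠ 0 := ofReal_ne_zero.2 (Real.rpow_pos_of_pos (abs_pos.2 hx) a).ne'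
  have hL : ((lam ^ a : ℝ) : ℂ) ≠ 0 := ofReal_ne_zero.2 (Real.rpow_pos_of_pos hlam a).ne'
  have hM : ((Real.sqrt m₀ : ℝ) : ℂ) ≠ 0 := ofReal_ne_zero.2 (Real.sqrt_pos.2 hm₀).ne'
  have e₁ : ((|x| ^ (-a) : ℝ) : ℂ) = ((|x| ^ a : ℝ) : ℂ)⁻¹ := by
    rw [Real.rpow_neg (abs_nonneg x), ofReal_inv]
  have e₂ : ((|x| ^ (-a - 2) : ℝ) : ℂ) = ((|x| ^ a : ℝ) : ℂ)⁻¹ * ((x : ℂ) ^ 2)⁻¹ := by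
    rw [sub_eq_add_neg, Real.rpow_add (abs_pos.2 hx), Real.rpow_neg (abs_nonneg x),
      Real.rpow_neg (abs_nonneg x), Real.rpow_two, sq_abs]
    push_cast
    ring
  simp only [Ppb, (hasDerivAt_Xop m₀ lam a hx hg).deriv, Xop, abs_neg, e₁, e₂]
  push_cast
  field_simp
  ring

theorem Ppb_Ppb_Xop (hm₀ : 0 < m₀) (hlam : 0 < lam) {f : ℝ → ℂ}
    (hf : TwiceDifferentiableOn f {0}ᶜ) {x : ℝ} (hx : x ≠ 0) :
    Ppb hbar m₀ lam a γ (Ppb hbar m₀ lam a γ (Xop m₀ lam a f)) x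
      = Xop m₀ lam a (Ppb hbar m₀ lam a γ (Ppb hbar m₀ lam a γ f)) x
        - 2 * I * hbar * (1 + a) * Ppb hbar m₀ lam a γ f x := by
  have hU : IsOpen ({0}ᶜ : Set ℝ) := isOpen_compl_singleton
  have hPf := differentiableOn_Ppb hbar m₀ lam a γ hf
  have hfx : DifferentiableAt ℝ f x := hf.1.differentiableAt (hU.mem_nhds hx)
  have hfneg : DifferentiableAt ℝ (fun y => f (-y)) x :=
    (hf.1.differentiableAt (hU.mem_nhds (neg_ne_zero.2 hx))).comp x differentiableAt_id.neg
  have hXPf : DifferentiableAt ℝ (Xop m₀ lam a (Ppb hbar m₀ lam a γ f)) x :=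
    (hasDerivAt_Xop m₀ lam a hx (hPf.differentiableAt (hU.mem_nhds hx))).differentiableAt
  have hcomm : Set.EqOn (Ppb hbar m₀ lam a γ (Xop m₀ lam a f))
      (fun y => Xop m₀ lam a (Ppb hbar m₀ lam a γ f) y + (-(I * hbar * (1 + a))) * f y
        + (-(I * hbar * (2 * γ - 1))) * f (-y)) {0}ᶜ := fun y hy => by
    rw [Ppb_Xop hbar m₀ lam a γ hm₀ hlam hy (hf.1.differentiableAt (hU.mem_nhds hy))]
    ring
  rw [Ppb_congr hbar m₀ lam a γ hx hcomm, Ppb_add hbar m₀ lam a γ (hXPf.fun_add (hfx.const_mul _))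
      (hfneg.const_mul _), Ppb_add hbar m₀ lam a γ hXPf (hfx.const_mul _), Ppb_const_mul,
    Ppb_const_mul, Ppb_comp_neg hbar m₀ lam a γ f hx,
    Ppb_Xop hbar m₀ lam a γ hm₀ hlam hx (hPf.differentiableAt (hU.mem_nhds hx))]
  ring

theorem Ppb_Xop_Xop (hm₀ : 0 < m₀) (hlam : 0 < lam) {f : ℝ → ℂ} {x : ℝ} (hx : x ≠ 0)
    (hf : DifferentiableAt ℝ f x) :
    Ppb hbar m₀ lam a γ (Xop m₀ lam a (Xop m₀ lam a f)) x
      = Xop m₀ lam a (Xop m₀ lam a (Ppb hbar m₀ lam a γ f)) x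
        - 2 * I * hbar * (1 + a) * Xop m₀ lam a f x := by
  have hPX := Ppb_Xop hbar m₀ lam a γ hm₀ hlam hx hf
  rw [Ppb_Xop hbar m₀ lam a γ hm₀ hlam hx (hasDerivAt_Xop m₀ lam a hx hf).differentiableAt]
  simp only [Xop] at hPX ⊢
  rw [hPX, abs_neg]
  push_cast
  ring

theorem HopPB_const_mul_add_const_mul (c₁ c₂ : ℂ) {u v : ℝ → ℂ}
    (hu : TwiceDifferentiableOn u {0}ᶜ) (hv : TwiceDifferentiableOn v {0}ᶜ) {x : ℝ} (hx : x ≠ 0) :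
    HopPB hbar m₀ ω lam a γ (fun y => c₁ * u y + c₂ * v y) x
      = c₁ * HopPB hbar m₀ ω lam a γ u x + c₂ * HopPB hbar m₀ ω lam a γ v x := by
  have hU : IsOpen ({0}ᶜ : Set ℝ) := isOpen_compl_singleton
  have hPu := differentiableOn_Ppb hbar m₀ lam a γ hu
  have hPv := differentiableOn_Ppb hbar m₀ lam a γ hv
  have hP : Set.EqOn (Ppb hbar m₀ lam a γ (fun y => c₁ * u y + c₂ * v y))
      (fun y => c₁ * Ppb hbar m₀ lam a γ u y + c₂ * Ppb hbar m₀ lam a γ v y) {0}ᶜ :=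
    fun y hy => by
      rw [Ppb_add _ _ _ _ _ ((hu.1.differentiableAt (hU.mem_nhds hy)).const_mul c₁)
        ((hv.1.differentiableAt (hU.mem_nhds hy)).const_mul c₂), Ppb_const_mul, Ppb_const_mul]
  simp only [HopPB]
  rw [Ppb_congr _ _ _ _ _ hx hP, Ppb_add _ _ _ _ _
    ((hPu.differentiableAt (hU.mem_nhds hx)).const_mul c₁)
    ((hPv.differentiableAt (hU.mem_nhds hx)).const_mul c₂), Ppb_const_mul, Ppb_const_mul]
  simp only [Xop]
  ring

theorem HopPB_Xop_sub_Xop_HopPB (hm₀ : 0 < m₀) (hlam : 0 < lam) {f : ℝ → ℂ}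
    (hf : TwiceDifferentiableOn f {0}ᶜ) {x : ℝ} (hx : x ≠ 0) :
    HopPB hbar m₀ ω lam a γ (Xop m₀ lam a f) x - Xop m₀ lam a (HopPB hbar m₀ ω lam a γ f) x
      = -(I * hbar * (1 + a)) * Ppb hbar m₀ lam a γ f x := by
  simp only [HopPB]
  rw [Ppb_Ppb_Xop hbar m₀ lam a γ hm₀ hlam hf hx]
  simp only [Xop, HopPB]
  ring

theorem HopPB_Ppb_sub_Ppb_HopPB (hm₀ : 0 < m₀) (hlam : 0 < lam) {f : ℝ → ℂ}
    (hf : TwiceDifferentiableOn f {0}ᶜ) (hf' : TwiceDifferentiableOn (deriv f) {0}ᶜ)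
    {x : ℝ} (hx : x ≠ 0) :
    HopPB hbar m₀ ω lam a γ (Ppb hbar m₀ lam a γ f) x
        - Ppb hbar m₀ lam a γ (HopPB hbar m₀ ω lam a γ f) x
      = I * hbar * ω ^ 2 * (1 + a) * Xop m₀ lam a f x := by
  have hfx : DifferentiableAt ℝ f x := hf.1.differentiableAt (isOpen_compl_singleton.mem_nhds hx)
  have hPPf : DifferentiableAt ℝ (Ppb hbar m₀ lam a γ (Ppb hbar m₀ lam a γ f)) x :=
    (differentiableOn_Ppb hbar m₀ lam a γ (twiceDifferentiableOn_Ppb hbar m₀ lam a γ hf hf')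
      ).differentiableAt (isOpen_compl_singleton.mem_nhds hx)
  have hXXf : DifferentiableAt ℝ (Xop m₀ lam a (Xop m₀ lam a f)) x :=
    (hasDerivAt_Xop m₀ lam a hx (hasDerivAt_Xop m₀ lam a hx hfx).differentiableAt).differentiableAt
  unfold HopPB
  rw [Ppb_add _ _ _ _ _ (hPPf.const_mul _) (hXXf.const_mul _), Ppb_const_mul, Ppb_const_mul,
    Ppb_Xop_Xop hbar m₀ lam a γ hm₀ hlam hx hfx]
  push_cast
  ring

theorem HopPB_commutator_ladder (hm₀ : 0 < m₀) (hlam : 0 < lam) {f : ℝ → ℂ}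
    (hf : TwiceDifferentiableOn f {0}ᶜ) (hf' : TwiceDifferentiableOn (deriv f) {0}ᶜ)
    {c₁ c₂ μ : ℂ} (h₁ : I * hbar * ω ^ 2 * (1 + a) * c₂ = μ * c₁)
    (h₂ : -(I * hbar * (1 + a)) * c₁ = μ * c₂) {x : ℝ} (hx : x ≠ 0) :
    HopPB hbar m₀ ω lam a γ (fun y => c₁ * Xop m₀ lam a f y + c₂ * Ppb hbar m₀ lam a γ f y) x
        - (c₁ * Xop m₀ lam a (HopPB hbar m₀ ω lam a γ f) x
          + c₂ * Ppb hbar m₀ lam a γ (HopPB hbar m₀ ω lam a γ f) x)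
      = μ * (c₁ * Xop m₀ lam a f x + c₂ * Ppb hbar m₀ lam a γ f x) := by
  rw [HopPB_const_mul_add_const_mul hbar m₀ ω lam a γ c₁ c₂ (twiceDifferentiableOn_Xop m₀ lam a hf)
    (twiceDifferentiableOn_Ppb hbar m₀ lam a γ hf hf') hx]
  linear_combination c₁ * HopPB_Xop_sub_Xop_HopPB hbar m₀ ω lam a γ hm₀ hlam hf hx
    + c₂ * HopPB_Ppb_sub_Ppb_HopPB hbar m₀ ω lam a γ hm₀ hlam hf hf' hx
    + Ppb hbar m₀ lam a γ f x * h₂ + Xop m₀ lam a f x * h₁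

end ParaboseOperators

theorem stmt13_general (m₀ ω hbar a γ : ℝ) (hm₀ : 0 < m₀) (hω : 0 < ω) (hhb : 0 < hbar)
    (lam : ℝ) (hlam : lam = Real.sqrt (m₀ * ω / hbar))
    (f : ℝ → ℂ)
    (hf : ∀ y : ℝ, y ≠ 0 → DifferentiableAt ℝ f y)
    (hf' : ∀ y : ℝ, y ≠ 0 → DifferentiableAt ℝ (deriv f) y)
    (hf'' : ∀ y : ℝ, y ≠ 0 → DifferentiableAt ℝ (deriv (deriv f)) y)
    (x : ℝ) (hx : x ≠ 0) :
    HopPB hbar m₀ ω lam a γ (aPlusPB hbar m₀ ω lam a γ f) x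
        - aPlusPB hbar m₀ ω lam a γ (HopPB hbar m₀ ω lam a γ f) x
      = ((hbar * ω * (1 + a) : ℝ) : ℂ) * aPlusPB hbar m₀ ω lam a γ f x ∧
    HopPB hbar m₀ ω lam a γ (aMinusPB hbar m₀ ω lam a γ f) x
        - aMinusPB hbar m₀ ω lam a γ (HopPB hbar m₀ ω lam a γ f) x
      = -((hbar * ω * (1 + a) : ℝ) : ℂ) * aMinusPB hbar m₀ ω lam a γ f x := by
  have hlam₀ : 0 < lam := hlam ▸ Real.sqrt_pos.2 (by positivity)
  have hf₁ : TwiceDifferentiableOn f {0}ᶜ :=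
    ⟨fun y hy => (hf y hy).differentiableWithinAt, fun y hy => (hf' y hy).differentiableWithinAt⟩
  have hf₂ : TwiceDifferentiableOn (deriv f) {0}ᶜ :=
    ⟨fun y hy => (hf' y hy).differentiableWithinAt, fun y hy => (hf'' y hy).differentiableWithinAt⟩
  have hs : Real.sqrt (hbar * ω) ≠ 0 := (Real.sqrt_pos.2 (by positivity)).ne'
  have hsC : (Real.sqrt (hbar * ω) : ℂ) ≠ 0 := ofReal_ne_zero.2 hs
  have hα : Real.sqrt (ω / hbar) = ω / Real.sqrt (hbar * ω) := by
    rw [eq_div_iff hs, ← Real.sqrt_mul (by positivity),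
      show ω / hbar * (hbar * ω) = ω * ω by field_simp, Real.sqrt_mul_self hω.le]
  have hplus : ∀ g, aPlusPB hbar m₀ ω lam a γ g = fun y =>
      ((1 / Real.sqrt 2 * Real.sqrt (ω / hbar) : ℝ) : ℂ) * Xop m₀ lam a g y
        + -(((1 / Real.sqrt 2 : ℝ) : ℂ) * (I / (Real.sqrt (hbar * ω) : ℂ)))
          * Ppb hbar m₀ lam a γ g y :=
    fun g => funext fun y => by simp only [aPlusPB]; push_cast; ring
  have hminus : ∀ g, aMinusPB hbar m₀ ω lam a γ g = fun y =>
      ((1 / Real.sqrt 2 * Real.sqrt (ω / hbar) : ℝ) : ℂ) * Xop m₀ lam a g y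
        + ((1 / Real.sqrt 2 : ℝ) : ℂ) * (I / (Real.sqrt (hbar * ω) : ℂ))
          * Ppb hbar m₀ lam a γ g y :=
    fun g => funext fun y => by simp only [aMinusPB]; push_cast; ring
  constructor
  · simp only [hplus]
    refine HopPB_commutator_ladder hbar m₀ ω lam a γ hm₀ hlam₀ hf₁ hf₂ ?_ ?_ hx
    · rw [hα]; push_cast; field_simp; linear_combination -(hbar * ω ^ 2 * (1 + a) : ℂ) * I_sq
    · rw [hα]; push_cast; field_simp
  · simp only [hminus]
    refine HopPB_commutator_ladder hbar m₀ ω lam a γ hm₀ hlam₀ hf₁ hf₂ ?_ ?_ hx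
    · rw [hα]; push_cast; field_simp; linear_combination (hbar * ω ^ 2 * (1 + a) : ℂ) * I_sq
    · rw [hα]; push_cast; field_simp

/-- the commutation relations `[H, ã^±] = ±ħω(1+a)ã^±` for the parabose oscillator
with position-dependent mass, for every `f` three times differentiable on `ℝ \ {0}` and every
`x ≠ 0`. -/
theorem stmt13 (m₀ ω hbar a γ : ℝ) (hm₀ : 0 < m₀) (hω : 0 < ω) (hhb : 0 < hbar)
    (ha : -1 < a) (hγ : 1 / 2 < γ)
    (lam : ℝ) (hlam : lam = Real.sqrt (m₀ * ω / hbar))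
    (f : ℝ → ℂ)
    (hf : ∀ y : ℝ, y ≠ 0 → DifferentiableAt ℝ f y)
    (hf' : ∀ y : ℝ, y ≠ 0 → DifferentiableAt ℝ (deriv f) y)
    (hf'' : ∀ y : ℝ, y ≠ 0 → DifferentiableAt ℝ (deriv (deriv f)) y)
    (x : ℝ) (hx : x ≠ 0) :
    HopPB hbar m₀ ω lam a γ (aPlusPB hbar m₀ ω lam a γ f) x
        - aPlusPB hbar m₀ ω lam a γ (HopPB hbar m₀ ω lam a γ f) x
      = ((hbar * ω * (1 + a) : ℝ) : ℂ) * aPlusPB hbar m₀ ω lam a γ f x ∧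
    HopPB hbar m₀ ω lam a γ (aMinusPB hbar m₀ ω lam a γ f) x
        - aMinusPB hbar m₀ ω lam a γ (HopPB hbar m₀ ω lam a γ f) x
      = -((hbar * ω * (1 + a) : ℝ) : ℂ) * aMinusPB hbar m₀ ω lam a γ f x :=
  stmt13_general m₀ ω hbar a γ hm₀ hω hhb lam hlam f hf hf' hf'' x hx
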